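/- Let T = (V,A) be an indecomposable tournament with |V| even and |V| ≥ 6. Then for each x ∈ V there is y ∈ V − {x} such that T − y is indecomposable. -/

import Mathlib

/-- A tournament on vertex type `V`, given by its arc relation. -/
def IsTournament {V : Type*} (r : V → V → Prop) : Prop :=
  (∀ x, ¬ r x x) ∧ ∀ x y : V, x ≠ y → (r x y ↔ ¬ r y x)

/-- `I` is an interval of the subtournament of `r` induced on `X`. -/
def IsIntervalOn {V : Type*} (r : V → V → Prop) (X I : Set V) : Prop :=
  I ⊆ X ∧ ∀ x ∈ X \ I, (∀ i ∈ I, r x i) ∨ (∀ i ∈ I, r i x)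

/-- The subtournament induced on `X` is indecomposable: all its intervals are trivial. -/
def IndecomposableOn {V : Type*} (r : V → V → Prop) (X : Set V) : Prop :=
  ∀ I : Set V, IsIntervalOn r X I → I = ∅ ∨ (∃ a, I = {a}) ∨ I = X

/-- The dual tournament, obtained by reversing all arcs. -/
def dual {V : Type*} (r : V → V → Prop) : V → V → Prop := fun x y => r y x

/-- `s` embeds into `r`: `s` is isomorphic to an induced subtournament of `r`. -/
def Embeds {W V : Type*} (s : W → W → Prop) (r : V → V → Prop) : Prop :=
  ∃ f : W → V, Function.Injective f ∧ ∀ a b, s a b ↔ r (f a) (f b)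

/-- The 3-cycle C₃. -/
def C3 : ZMod 3 → ZMod 3 → Prop := fun i j => j = i + 1

/-- The critical tournament `T_{2n+1}` on `ZMod (2n+1)`: arc `i → j` iff `j - i ∈ {1,…,n}`. -/
def Tt (n : ℕ) : ZMod (2*n+1) → ZMod (2*n+1) → Prop :=
  fun i j => (j - i).val ∈ Finset.Icc 1 n

/-- The critical tournament `W_{2n+1}` on `Fin (2n+1)`:
`0 < 1 < ⋯ < 2n-1` and odds → `2n` → evens. -/
def Wt (n : ℕ) : Fin (2*n+1) → Fin (2*n+1) → Prop :=
  fun i j =>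
    if i.val = 2*n then j.val % 2 = 0 ∧ j.val ≠ 2*n
    else if j.val = 2*n then i.val % 2 = 1
    else i.val < j.val

/-- The diamond `D₄`: `{0,1,2}` is a 3-cycle and `3 → {0,1,2}`. -/
def D4 : Fin 4 → Fin 4 → Prop :=
  fun i j => (i = 3 ∧ j ≠ 3) ∨ (i ≠ 3 ∧ j ≠ 3 ∧ j.val = (i.val + 1) % 3)

/-- `U₅`: obtained from `T₅` by reversing the arc inside `{3,4}`. -/
def U5 : ZMod 5 → ZMod 5 → Prop :=
  fun i j =>
    if (i = 3 ∧ j = 4) ∨ (i = 4 ∧ j = 3) then Tt 2 j i else Tt 2 i j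

/-- The tournament `F_{n+1}` on `{0,…,n}`: arc `i → j` iff `i+1 < j` or `i = j+1`. -/
def Ft (n : ℕ) : Fin (n+1) → Fin (n+1) → Prop :=
  fun i j => i.val + 1 < j.val ∨ i.val = j.val + 1

/-- `Ext(X)`: vertices outside `X` extending `X` indecomposably. -/
def ExtSet {V : Type*} (r : V → V → Prop) (X : Set V) : Set V :=
  {x | x ∉ X ∧ IndecomposableOn r (X ∪ {x})}

/-- `[X]`: vertices outside `X` relating uniformly to `X`. -/
def BrSet {V : Type*} (r : V → V → Prop) (X : Set V) : Set V :=
  {x | x ∉ X ∧ ((∀ y ∈ X, r x y) ∨ (∀ y ∈ X, r y x))}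

/-- `X(u)`: vertices `x` outside `X` such that `{u,x}` is an interval of `T(X ∪ {x})`. -/
def XuSet {V : Type*} (r : V → V → Prop) (X : Set V) (u : V) : Set V :=
  {x | x ∉ X ∧ IsIntervalOn r (X ∪ {x}) {u, x}}

/-!
Ehrenfeucht and Rozenberg: in an indecomposable `T`, if `T[X]` is indecomposable, `|X| ≥ 3`
and at least two vertices lie outside `X`, then `T[X ∪ {p, q}]` is indecomposable for some
`p ≠ q` outside `X`. Starting from a 3-cycle through `x` (without one, `x` and its out-neighbours
would form an interval of `T`) and adding pairs, the number of vertices left outside stays odd,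
so the process ends at `V − y` with `y` off the cycle.

For the extension step, the vertices outside `X` fall into `Ext(X)`, `[X]` and the classes
`X(u)`, `u ∈ X`. If no pair works, a case analysis on a nontrivial interval of `X ∪ {x, z}`
shows that every `x ∈ X(u)` is seen like `u` from outside `X ∪ X(u)`; then `{u} ∪ X(u)` is an
interval of `T`, and so is `X` when all `X(u)` are empty. Hence `Ext(X)` contains some `x₀`, and
the same argument, run for `X ∪ {x₀}` with the help of `X`, finds `y` such that `X ∪ {x₀, y}`
is indecomposable.
-/

open Set

section

variable {V : Type*} {r : V → V → Prop} {X Y I : Set V} {u v w x z x₀ : V}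

namespace IsTournament

theorem ne_of_rel (h : IsTournament r) (hab : r u v) : u ≠ v := by
  rintro rfl
  exact h.1 u hab

theorem asymm (h : IsTournament r) (hab : r u v) : ¬ r v u :=
  (h.2 u v (h.ne_of_rel hab)).mp hab

theorem rel_of_not_rel (h : IsTournament r) (huv : u ≠ v) (hn : ¬ r u v) : r v u :=
  not_not.mp fun hvu => hn ((h.2 u v huv).mpr hvu)

theorem swap_iff (h : IsTournament r) (huv : u ≠ v) (hwz : w ≠ z) (H : r u v ↔ r w z) :
    r v u ↔ r z w := by
  rw [h.2 v u huv.symm, h.2 z w hwz.symm, H]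

theorem uniform_of_iff (h : IsTournament r) {S : Set V} (hw : w ∉ S)
    (H : ∀ i ∈ S, r w i ↔ r w u) : (∀ i ∈ S, r w i) ∨ (∀ i ∈ S, r i w) := by
  by_cases hu : r w u
  · exact Or.inl fun i hi => (H i hi).mpr hu
  · exact Or.inr fun i hi =>
      h.rel_of_not_rel (fun e => hw (e ▸ hi)) fun hwi => hu ((H i hi).mp hwi)

theorem iff_of_uniform (h : IsTournament r) {S : Set V}
    (hS : (∀ i ∈ S, r w i) ∨ (∀ i ∈ S, r i w)) (hu : u ∈ S) (hv : v ∈ S) :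
    r w u ↔ r w v := by
  rcases hS with hS | hS
  · exact iff_of_true (hS u hu) (hS v hv)
  · exact iff_of_false (h.asymm (hS u hu)) (h.asymm (hS v hv))

end IsTournament

theorem IsIntervalOn.inter (hI : IsIntervalOn r Y I) (hXY : X ⊆ Y) :
    IsIntervalOn r X (I ∩ X) :=
  ⟨inter_subset_right, fun a ha =>
    (hI.2 a ⟨hXY ha.1, fun haI => ha.2 ⟨haI, ha.1⟩⟩).imp
      (fun H i hi => H i hi.1) (fun H i hi => H i hi.1)⟩

theorem IsIntervalOn.rel_iff (h : IsTournament r) (hI : IsIntervalOn r Y I) (hw : w ∈ Y)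
    (hwI : w ∉ I) (hu : u ∈ I) (hv : v ∈ I) : r w u ↔ r w v :=
  h.iff_of_uniform (hI.2 w ⟨hw, hwI⟩) hu hv

theorem indecomposableOn_iff :
    IndecomposableOn r X ↔ ∀ I, IsIntervalOn r X I → I.Nontrivial → I = X := by
  refine ⟨fun hX I hI hn => ?_, fun hX I hI => ?_⟩
  · rcases hX I hI with rfl | ⟨a, rfl⟩ | hIX
    · exact absurd hn not_nontrivial_empty
    · exact absurd hn not_nontrivial_singleton
    · exact hIX
  · by_cases hn : I.Nontrivial
    · exact Or.inr (Or.inr (hX I hI hn))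
    · rcases (not_nontrivial_iff.mp hn).eq_empty_or_singleton with hI0 | hI1
      · exact Or.inl hI0
      · exact Or.inr (Or.inl hI1)

theorem IndecomposableOn.eq_of_isIntervalOn (hX : IndecomposableOn r X)
    (hI : IsIntervalOn r X I) (hn : I.Nontrivial) : I = X :=
  indecomposableOn_iff.mp hX I hI hn

theorem exists_isIntervalOn_of_not_indecomposableOn (hY : ¬ IndecomposableOn r Y) :
    ∃ I, IsIntervalOn r Y I ∧ I.Nontrivial ∧ I ≠ Y := by
  simpa [indecomposableOn_iff] using hY

theorem nontrivial_of_two_lt_encard (hX : 2 < X.encard) : X.Nontrivial :=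
  one_lt_encard_iff_nontrivial.mp (one_le_two.trans_lt hX)

theorem nontrivial_sdiff_singleton_of_two_lt_encard (hX : 2 < X.encard) (u : V) :
    (X \ {u}).Nontrivial := by
  rw [← one_lt_encard_iff_nontrivial]
  calc (1 : ℕ∞) < X.encard - 1 := lt_tsub_iff_left.mpr hX
    _ ≤ (X \ {u}).encard := encard_tsub_one_le_encard_sdiff_singleton X u

theorem IndecomposableOn.notMem_BrSet_sdiff_singleton (hX : IndecomposableOn r X) (hu : u ∈ X)
    (hn : (X \ {u}).Nontrivial) : u ∉ BrSet r (X \ {u}) := by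
  intro hbr
  have hI : IsIntervalOn r X (X \ {u}) := by
    refine ⟨sdiff_subset, fun a ha => ?_⟩
    obtain ⟨-, rfl⟩ : a ∈ X ∧ a = u := by simpa using ha
    exact hbr.2
  exact (hX.eq_of_isIntervalOn hI hn ▸ hu).2 rfl

theorem notMem_of_mem_inter_eq_singleton (hIX : I ∩ X = {u}) (hv : v ∈ I) (hvu : v ≠ u) :
    v ∉ X := fun hvX => hvu ((eq_singleton_iff_unique_mem.mp hIX).2 v ⟨hv, hvX⟩)

theorem BrSet_anti (hXY : X ⊆ Y) : BrSet r Y ⊆ BrSet r X := fun _ hz =>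
  ⟨fun hzX => hz.1 (hXY hzX),
    hz.2.imp (fun H w hw => H w (hXY hw)) (fun H w hw => H w (hXY hw))⟩

theorem mem_BrSet_of_isIntervalOn (hI : IsIntervalOn r Y I) (hXI : X ⊆ I) (hxY : x ∈ Y)
    (hxI : x ∉ I) : x ∈ BrSet r X :=
  ⟨fun hxX => hxI (hXI hxX),
    (hI.2 x ⟨hxY, hxI⟩).imp (fun H w hw => H w (hXI hw)) (fun H w hw => H w (hXI hw))⟩

theorem mem_XuSet_of_isIntervalOn (hI : IsIntervalOn r Y I) (hXY : X ∪ {x} ⊆ Y)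
    (hIX : I ∩ X = {u}) (hx : x ∉ X) (hxI : x ∈ I) : x ∈ XuSet r X u := by
  refine ⟨hx, ?_⟩
  have hIu : I ∩ (X ∪ {x}) = {u, x} := by
    rw [inter_union_distrib_left, hIX, inter_singleton_of_mem hxI, singleton_union]
  exact hIu ▸ hI.inter hXY

theorem XuSet_subset (hXY : X ⊆ Y) (hu : u ∈ X) : XuSet r Y u ⊆ XuSet r X u := fun x hx => by
  have hux : ({u, x} : Set V) ⊆ X ∪ {x} :=
    pair_subset (mem_union_left _ hu) (mem_union_right _ rfl)
  exact ⟨fun hxX => hx.1 (hXY hxX),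
    inter_eq_left.mpr hux ▸ hx.2.inter (union_subset_union_left _ hXY)⟩

theorem notMem_BrSet_of_mem_ExtSet (hn : X.Nontrivial) (hx : x ∈ ExtSet r X) :
    x ∉ BrSet r X := by
  intro hbr
  have hI : IsIntervalOn r (X ∪ {x}) X := by
    refine ⟨subset_union_left, fun a ha => ?_⟩
    obtain rfl : a = x := ha.1.resolve_left ha.2
    exact hbr.2
  exact hx.1 ((hx.2.eq_of_isIntervalOn hI hn).symm ▸ mem_union_right X rfl)

theorem notMem_XuSet_of_mem_ExtSet (hn : X.Nontrivial) (hu : u ∈ X) (hx : x ∈ ExtSet r X) :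
    x ∉ XuSet r X u := by
  intro hxu
  have hux : u ≠ x := fun e => hx.1 (e ▸ hu)
  have hI := hx.2.eq_of_isIntervalOn hxu.2 (nontrivial_pair hux)
  obtain ⟨w, hw, hwu⟩ := hn.exists_ne u
  have hwI : w ∈ ({u, x} : Set V) := hI ▸ mem_union_left _ hw
  have hwx : w ≠ x := fun e => hx.1 (e ▸ hw)
  simp [hwu, hwx] at hwI

theorem mem_ExtSet_or_mem_BrSet_or_exists_mem_XuSet (hX : IndecomposableOn r X) (hx : x ∉ X) :
    x ∈ ExtSet r X ∨ x ∈ BrSet r X ∨ ∃ u ∈ X, x ∈ XuSet r X u := by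
  by_cases hind : IndecomposableOn r (X ∪ {x})
  · exact Or.inl ⟨hx, hind⟩
  obtain ⟨I, hI, hn, hIY⟩ := exists_isIntervalOn_of_not_indecomposableOn hind
  rcases hX _ (hI.inter subset_union_left) with hIX | ⟨u, hIX⟩ | hIX
  · obtain ⟨a, ha, hax⟩ := hn.exists_ne x
    exact (eq_empty_iff_forall_notMem.mp hIX a ⟨ha, (hI.1 ha).resolve_right hax⟩).elim
  · have hu : u ∈ I ∩ X := hIX ▸ rfl
    obtain ⟨a, ha, hau⟩ := hn.exists_ne u
    obtain rfl : a = x := (hI.1 ha).resolve_left (notMem_of_mem_inter_eq_singleton hIX ha hau)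
    exact Or.inr (Or.inr ⟨u, hu.2, mem_XuSet_of_isIntervalOn hI subset_rfl hIX hx ha⟩)
  · have hXI : X ⊆ I := inter_eq_right.mp hIX
    have hxI : x ∉ I := fun hxI => hIY (hI.1.antisymm (union_subset hXI (by simpa using hxI)))
    exact Or.inr (Or.inl (mem_BrSet_of_isIntervalOn hI hXI (by simp) hxI))

namespace IsTournament

theorem rel_iff_of_mem_XuSet (h : IsTournament r) (hx : x ∈ XuSet r X u) (hw : w ∈ X)
    (hwu : w ≠ u) : r w u ↔ r w x :=
  hx.2.rel_iff h (mem_union_left _ hw)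
    (by rintro (rfl | rfl); exacts [hwu rfl, hx.1 hw]) (by simp) (by simp)

theorem mem_XuSet_of_rel_iff (h : IsTournament r) (hu : u ∈ X) (hx : x ∉ X)
    (H : ∀ w ∈ X, w ≠ u → (r w u ↔ r w x)) : x ∈ XuSet r X u := by
  refine ⟨hx, pair_subset (mem_union_left _ hu) (by simp), fun a ha => ?_⟩
  obtain ⟨haX, hau, hax⟩ : a ∈ X ∧ a ≠ u ∧ a ≠ x := by
    simp only [mem_sdiff, mem_union, mem_singleton_iff, mem_insert_iff, not_or] at ha
    exact ⟨ha.1.resolve_right ha.2.2, ha.2⟩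
  refine h.uniform_of_iff (u := u) (by simp [hau, hax]) ?_
  simpa using (H a haX hau).symm

theorem mem_XuSet_of_twin (h : IsTournament r) (hu : u ∈ X) (hx : x ∈ XuSet r X u)
    (hz : z ∉ X) (H : ∀ w ∈ X, r w x ↔ r w z) : z ∈ XuSet r X u :=
  h.mem_XuSet_of_rel_iff hu hz fun w hw hwu => (h.rel_iff_of_mem_XuSet hx hw hwu).trans (H w hw)

theorem mem_BrSet_of_twin (h : IsTournament r) (hx : x ∈ BrSet r X) (hz : z ∉ X)
    (H : ∀ w ∈ X, r w x ↔ r w z) : z ∈ BrSet r X := by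
  refine ⟨hz, hx.2.imp (fun Hx w hw => ?_) (fun Hx w hw => (H w hw).mp (Hx w hw))⟩
  exact h.rel_of_not_rel (fun e => hz (e ▸ hw))
    fun hwz => h.asymm (Hx w hw) ((H w hw).mpr hwz)

theorem notMem_XuSet_of_mem_BrSet (h : IsTournament r) (hX : IndecomposableOn r X)
    (hX3 : 2 < X.encard) (hu : u ∈ X) (hz : z ∈ BrSet r X) : z ∉ XuSet r X u := by
  intro hzu
  refine hX.notMem_BrSet_sdiff_singleton hu (nontrivial_sdiff_singleton_of_two_lt_encard hX3 u) ?_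
  refine h.mem_BrSet_of_twin (BrSet_anti sdiff_subset hz) (by simp) fun w hw => ?_
  exact (h.rel_iff_of_mem_XuSet hzu hw.1 (by simpa using hw.2)).symm

theorem eq_of_mem_XuSet (h : IsTournament r) (hX : IndecomposableOn r X) (hX3 : 2 < X.encard)
    (hu : u ∈ X) (hv : v ∈ X) (hxu : x ∈ XuSet r X u) (hxv : x ∈ XuSet r X v) : u = v := by
  by_contra huv
  have hI : IsIntervalOn r X {u, v} := by
    refine ⟨pair_subset hu hv, fun a ha => h.uniform_of_iff (u := v) ha.2 ?_⟩
    obtain ⟨hau, hav⟩ : a ≠ u ∧ a ≠ v := by simpa using ha.2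
    simpa using (h.rel_iff_of_mem_XuSet hxu ha.1 hau).trans
      (h.rel_iff_of_mem_XuSet hxv ha.1 hav).symm
  obtain ⟨w, hw, hwv⟩ := (nontrivial_sdiff_singleton_of_two_lt_encard hX3 u).exists_ne v
  have hwI : w ∈ ({u, v} : Set V) :=
    (hX.eq_of_isIntervalOn hI (nontrivial_pair huv)).symm ▸ hw.1
  rcases hwI with rfl | rfl
  exacts [hw.2 rfl, hwv rfl]

/-- The disjuncts come from a nontrivial interval `I` of `X ∪ {x, z}`: `I ∩ X` is `X`, `∅` or
some `{w}`, and each of `x`, `z` may or may not lie in `I`. -/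
theorem cases_of_not_indecomposableOn_union_pair (h : IsTournament r)
    (hX : IndecomposableOn r X) (hx : x ∉ X) (hz : z ∉ X)
    (hdec : ¬ IndecomposableOn r (X ∪ {x, z})) :
    x ∈ BrSet r X ∨ (∀ w ∈ X, r z x ↔ r z w) ∨ (∀ w ∈ X, r w x ↔ r w z) ∨
      (∃ w ∈ X, x ∈ XuSet r X w ∧ (r z x ↔ r z w)) ∨
      ∃ w ∈ X, z ∈ XuSet r X w ∧ (x ∈ XuSet r X w ∨ (r x z ↔ r x w)) := by
  obtain ⟨I, hI, hn, hIY⟩ := exists_isIntervalOn_of_not_indecomposableOn hdec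
  have hxY : x ∈ X ∪ {x, z} := by simp
  have hzY : z ∈ X ∪ {x, z} := by simp
  rcases hX _ (hI.inter subset_union_left) with hIX | ⟨w, hIX⟩ | hIX
  · have hIxz : ∀ a ∈ I, a = x ∨ a = z := fun a ha =>
      (hI.1 ha).resolve_left fun haX => eq_empty_iff_forall_notMem.mp hIX a ⟨ha, haX⟩
    obtain ⟨a, ha, hax⟩ := hn.exists_ne x
    obtain ⟨b, hb, hbz⟩ := hn.exists_ne z
    have hzI : z ∈ I := (hIxz a ha).resolve_left hax ▸ ha
    have hxI : x ∈ I := (hIxz b hb).resolve_right hbz ▸ hb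
    refine Or.inr (Or.inr (Or.inl fun w hw => hI.rel_iff h (mem_union_left _ hw) ?_ hxI hzI))
    exact fun hwI => eq_empty_iff_forall_notMem.mp hIX w ⟨hwI, hw⟩
  · have hw : w ∈ I ∩ X := hIX ▸ rfl
    have hXxY : X ∪ {x} ⊆ X ∪ {x, z} := union_subset_union_right X (by simp)
    have hXzY : X ∪ {z} ⊆ X ∪ {x, z} := union_subset_union_right X (by simp)
    by_cases hzI : z ∈ I
    · refine Or.inr (Or.inr (Or.inr (Or.inr
        ⟨w, hw.2, mem_XuSet_of_isIntervalOn hI hXzY hIX hz hzI, ?_⟩)))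
      by_cases hxI : x ∈ I
      · exact Or.inl (mem_XuSet_of_isIntervalOn hI hXxY hIX hx hxI)
      · exact Or.inr (hI.rel_iff h hxY hxI hzI hw.1)
    · obtain ⟨a, ha, haw⟩ := hn.exists_ne w
      have hxI : x ∈ I := by
        obtain rfl | rfl : a = x ∨ a = z :=
          by simpa [notMem_of_mem_inter_eq_singleton hIX ha haw] using hI.1 ha
        exacts [ha, absurd ha hzI]
      exact Or.inr (Or.inr (Or.inr (Or.inl ⟨w, hw.2,
        mem_XuSet_of_isIntervalOn hI hXxY hIX hx hxI, hI.rel_iff h hzY hzI hxI hw.1⟩)))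
  · have hXI : X ⊆ I := inter_eq_right.mp hIX
    by_cases hxI : x ∈ I
    · have hzI : z ∉ I := fun hzI =>
        hIY (hI.1.antisymm (union_subset hXI (pair_subset hxI hzI)))
      exact Or.inr (Or.inl fun w hw => hI.rel_iff h hzY hzI hxI (hXI hw))
    · exact Or.inl (mem_BrSet_of_isIntervalOn hI hXI hxY hxI)

theorem rel_iff_comm_of_mem_XuSet (h : IsTournament r) (hu : u ∈ X) (hv : v ∈ X) (huv : u ≠ v)
    (hx : x ∈ XuSet r X u) (hz : z ∈ XuSet r X v) (hxz : x ≠ z) (H : r x z ↔ r x v) :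
    r z x ↔ r z u :=
  calc r z x ↔ r v x := h.swap_iff hxz (fun e => hx.1 (e ▸ hv)) H
    _ ↔ r v u := (h.rel_iff_of_mem_XuSet hx hv huv.symm).symm
    _ ↔ r z u := h.swap_iff huv (fun e => hz.1 (e ▸ hu)) (h.rel_iff_of_mem_XuSet hz hu huv)

theorem rel_iff_of_mem_BrSet_of_mem_XuSet (h : IsTournament r) (hX : IndecomposableOn r X)
    (hX3 : 2 < X.encard) (hu : u ∈ X) (hz : z ∈ BrSet r X) (hx : x ∈ XuSet r X u)
    (hdec : ¬ IndecomposableOn r (X ∪ {x, z})) : r z x ↔ r z u := by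
  rcases h.cases_of_not_indecomposableOn_union_pair hX hx.1 hz.1 hdec with
    hxB | hzx | htwin | ⟨w, hw, hxw, hzxw⟩ | ⟨w, hw, hzw, -⟩
  · exact absurd hx (h.notMem_XuSet_of_mem_BrSet hX hX3 hu hxB)
  · exact hzx u hu
  · have hxB := h.mem_BrSet_of_twin hz hx.1 fun w hw => (htwin w hw).symm
    exact absurd hx (h.notMem_XuSet_of_mem_BrSet hX hX3 hu hxB)
  · rwa [h.eq_of_mem_XuSet hX hX3 hu hw hx hxw]
  · exact absurd hzw (h.notMem_XuSet_of_mem_BrSet hX hX3 hw hz)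

theorem rel_iff_of_mem_XuSet_of_mem_XuSet (h : IsTournament r) (hX : IndecomposableOn r X)
    (hX3 : 2 < X.encard) (hu : u ∈ X) (hv : v ∈ X) (huv : u ≠ v) (hx : x ∈ XuSet r X u)
    (hz : z ∈ XuSet r X v) (hdec : ¬ IndecomposableOn r (X ∪ {x, z})) : r z x ↔ r z u := by
  rcases h.cases_of_not_indecomposableOn_union_pair hX hx.1 hz.1 hdec with
    hxB | hzx | htwin | ⟨w, hw, hxw, hzxw⟩ | ⟨w, hw, hzw, hxw | hxzw⟩
  · exact absurd hx (h.notMem_XuSet_of_mem_BrSet hX hX3 hu hxB)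
  · exact hzx u hu
  · exact absurd (h.eq_of_mem_XuSet hX hX3 hu hv (h.mem_XuSet_of_twin hu hx hz.1 htwin) hz) huv
  · rwa [h.eq_of_mem_XuSet hX hX3 hu hw hx hxw]
  · obtain rfl := h.eq_of_mem_XuSet hX hX3 hv hw hz hzw
    exact absurd (h.eq_of_mem_XuSet hX hX3 hu hv hx hxw) huv
  · obtain rfl := h.eq_of_mem_XuSet hX hX3 hv hw hz hzw
    have hxz : x ≠ z := fun e => huv (h.eq_of_mem_XuSet hX hX3 hu hv hx (e ▸ hz))
    exact h.rel_iff_comm_of_mem_XuSet hu hv huv hx hz hxz hxzw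

theorem rel_iff_of_mem_XuSet_of_twin (h : IsTournament r) (hX : IndecomposableOn r X)
    (hX3 : 2 < X.encard) (hx₀ : x₀ ∈ ExtSet r X) (hu : u ∈ X) (hx : x ∈ XuSet r X u)
    (hz : z ∉ X) (hzx₀ : ∀ w ∈ X, r w x₀ ↔ r w z)
    (hdec : ¬ IndecomposableOn r (X ∪ {x, z})) : r z x ↔ r z u := by
  rcases h.cases_of_not_indecomposableOn_union_pair hX hx.1 hz hdec with
    hxB | hzx | htwin | ⟨w, hw, hxw, hzxw⟩ | ⟨w, hw, hzw, -⟩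
  · exact absurd hx (h.notMem_XuSet_of_mem_BrSet hX hX3 hu hxB)
  · exact hzx u hu
  · have hx₀u :=
      h.mem_XuSet_of_twin hu hx hx₀.1 fun w hw => (htwin w hw).trans (hzx₀ w hw).symm
    exact absurd hx₀u (notMem_XuSet_of_mem_ExtSet (nontrivial_of_two_lt_encard hX3) hu hx₀)
  · rwa [h.eq_of_mem_XuSet hX hX3 hu hw hx hxw]
  · have hx₀w := h.mem_XuSet_of_twin hw hzw hx₀.1 fun w hw => (hzx₀ w hw).symm
    exact absurd hx₀w (notMem_XuSet_of_mem_ExtSet (nontrivial_of_two_lt_encard hX3) hw hx₀)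

theorem rel_iff_of_twin_of_mem_BrSet (h : IsTournament r) (hX : IndecomposableOn r X)
    (hX3 : 2 < X.encard) (hx₀ : x₀ ∈ ExtSet r X) (hx : x ∉ X)
    (hxx₀ : ∀ w ∈ X, r w x₀ ↔ r w x)
    (hz : z ∈ BrSet r (X ∪ {x₀})) (hdec : ¬ IndecomposableOn r (X ∪ {x, z})) :
    r z x ↔ r z x₀ := by
  have hzX : z ∈ BrSet r X := BrSet_anti subset_union_left hz
  have hzx₀ : ∀ w ∈ X, r z w ↔ r z x₀ := fun w hw =>
    h.iff_of_uniform hz.2 (mem_union_left _ hw) (mem_union_right _ rfl)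
  have hx₀B : x₀ ∉ BrSet r X := notMem_BrSet_of_mem_ExtSet (nontrivial_of_two_lt_encard hX3) hx₀
  rcases h.cases_of_not_indecomposableOn_union_pair hX hx hzX.1 hdec with
    hxB | hzx | htwin | ⟨w, hw, -, hzxw⟩ | ⟨w, hw, hzw, -⟩
  · exact absurd (h.mem_BrSet_of_twin hxB hx₀.1 fun w hw => (hxx₀ w hw).symm) hx₀B
  · obtain ⟨w, hw, -⟩ := (nontrivial_sdiff_singleton_of_two_lt_encard hX3 x).nonempty
    exact (hzx w hw).trans (hzx₀ w hw)
  · refine absurd (h.mem_BrSet_of_twin hzX hx₀.1 fun w hw => ?_) hx₀B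
    exact ((hxx₀ w hw).trans (htwin w hw)).symm
  · exact hzxw.trans (hzx₀ w hw)
  · exact absurd hzw (h.notMem_XuSet_of_mem_BrSet hX hX3 hw hzX)

theorem rel_iff_of_ExtSet_eq_empty (h : IsTournament r) (hX : IndecomposableOn r X)
    (hX3 : 2 < X.encard) (hE : ExtSet r X = ∅) (hu : u ∈ X) (hx : x ∈ XuSet r X u)
    (hz : z ∉ X) (hzu : z ∉ XuSet r X u) (hdec : ¬ IndecomposableOn r (X ∪ {x, z})) :
    r z x ↔ r z u := by
  rcases mem_ExtSet_or_mem_BrSet_or_exists_mem_XuSet hX hz with hzE | hzB | ⟨v, hv, hzv⟩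
  · exact absurd hzE (hE ▸ notMem_empty z)
  · exact h.rel_iff_of_mem_BrSet_of_mem_XuSet hX hX3 hu hzB hx hdec
  · have huv : u ≠ v := by rintro rfl; exact hzu hzv
    exact h.rel_iff_of_mem_XuSet_of_mem_XuSet hX hX3 hu hv huv hx hzv hdec

theorem rel_iff_of_mem_ExtSet (h : IsTournament r) (hX : IndecomposableOn r X)
    (hX3 : 2 < X.encard) (hx₀ : x₀ ∈ ExtSet r X) (hE : ExtSet r (X ∪ {x₀}) = ∅)
    (hu : u ∈ X ∪ {x₀}) (hx : x ∈ XuSet r (X ∪ {x₀}) u) (hz : z ∉ X ∪ {x₀})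
    (hzu : z ∉ XuSet r (X ∪ {x₀}) u) (hdec : ¬ IndecomposableOn r (X ∪ {x, z})) :
    r z x ↔ r z u := by
  have hXB : X ⊆ X ∪ {x₀} := subset_union_left
  have hxX : x ∉ X := fun hxX => hx.1 (hXB hxX)
  have hzX : z ∉ X := fun hzX => hz (hXB hzX)
  have htwin {y} (hy : y ∈ XuSet r (X ∪ {x₀}) x₀) (w) (hw : w ∈ X) : r w x₀ ↔ r w y :=
    h.rel_iff_of_mem_XuSet hy (hXB hw) (fun e => hx₀.1 (e ▸ hw))
  have hx₀B : x₀ ∈ X ∪ {x₀} := mem_union_right _ rfl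
  rcases mem_ExtSet_or_mem_BrSet_or_exists_mem_XuSet hx₀.2 hz with hzE | hzB | ⟨v, hv, hzv⟩
  · exact absurd hzE (hE ▸ notMem_empty z)
  · rcases hu with hu | rfl
    · exact h.rel_iff_of_mem_BrSet_of_mem_XuSet hX hX3 hu (BrSet_anti hXB hzB)
        (XuSet_subset hXB hu hx) hdec
    · exact h.rel_iff_of_twin_of_mem_BrSet hX hX3 hx₀ hxX (htwin hx) hzB hdec
  · have huv : u ≠ v := by rintro rfl; exact hzu hzv
    rcases hu with hu | rfl <;> rcases hv with hv | rfl
    · exact h.rel_iff_of_mem_XuSet_of_mem_XuSet hX hX3 hu hv huv (XuSet_subset hXB hu hx)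
        (XuSet_subset hXB hv hzv) hdec
    · exact h.rel_iff_of_mem_XuSet_of_twin hX hX3 hx₀ hu (XuSet_subset hXB hu hx) hzX
        (htwin hzv) hdec
    · have hxz : x ≠ z := by rintro rfl; exact hzu hx
      refine h.rel_iff_comm_of_mem_XuSet hx₀B (hXB hv) huv hx hzv hxz ?_
      exact h.rel_iff_of_mem_XuSet_of_twin hX hX3 hx₀ hv (XuSet_subset hXB hv hzv) hxX (htwin hx)
        (by rwa [pair_comm])
    · exact absurd rfl huv

theorem isIntervalOn_insert_XuSet (h : IsTournament r) (hu : u ∈ X)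
    (hrep : ∀ x ∈ XuSet r X u, ∀ z ∉ X, z ∉ XuSet r X u → (r z x ↔ r z u)) :
    IsIntervalOn r univ (insert u (XuSet r X u)) := by
  refine ⟨subset_univ _, fun w hw => h.uniform_of_iff (u := u) hw.2 fun i hi => ?_⟩
  rcases hi with rfl | hi
  · rfl
  by_cases hwX : w ∈ X
  · exact (h.rel_iff_of_mem_XuSet hi hwX fun e => hw.2 (e ▸ mem_insert _ _)).symm
  · exact hrep i hi w hwX fun hwu => hw.2 (mem_insert_of_mem _ hwu)

theorem ExtSet_nonempty (h : IsTournament r) (hT : IndecomposableOn r univ)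
    (hX : IndecomposableOn r X) (hn : X.Nontrivial) (hXT : X ≠ univ)
    (hrep : ∀ u ∈ X, ∀ x ∈ XuSet r X u, ∀ z ∉ X, z ∉ XuSet r X u → (r z x ↔ r z u)) :
    (ExtSet r X).Nonempty := by
  by_contra hE
  by_cases hXu : ∃ u ∈ X, (XuSet r X u).Nonempty
  · obtain ⟨u, hu, x, hx⟩ := hXu
    have hQn : (insert u (XuSet r X u)).Nontrivial :=
      nontrivial_of_mem_mem_ne (mem_insert u _) (mem_insert_of_mem u hx) fun e => hx.1 (e ▸ hu)
    have hQ := hT.eq_of_isIntervalOn (h.isIntervalOn_insert_XuSet hu (hrep u hu)) hQn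
    obtain ⟨w, hw, hwu⟩ := hn.exists_ne u
    rcases (hQ ▸ mem_univ w : w ∈ insert u (XuSet r X u)) with rfl | hw'
    exacts [hwu rfl, hw'.1 hw]
  · simp only [not_exists, not_and, not_nonempty_iff_eq_empty] at hXu
    have hI : IsIntervalOn r univ X := by
      refine ⟨subset_univ _, fun y hy => ?_⟩
      rcases mem_ExtSet_or_mem_BrSet_or_exists_mem_XuSet hX hy.2 with hyE | hyB | ⟨u, hu, hyu⟩
      · exact absurd ⟨y, hyE⟩ hE
      · exact hyB.2
      · exact absurd hyu (hXu u hu ▸ notMem_empty y)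
    exact hXT (hT.eq_of_isIntervalOn hI hn)

theorem exists_pair_indecomposableOn (h : IsTournament r) (hT : IndecomposableOn r univ)
    (hX : IndecomposableOn r X) (hX3 : 2 < X.encard) (hXc : Xᶜ.Nontrivial) :
    ∃ p q, p ∉ X ∧ q ∉ X ∧ p ≠ q ∧ IndecomposableOn r (X ∪ {p, q}) := by
  by_contra! hbad
  have hn := nontrivial_of_two_lt_encard hX3
  rcases (ExtSet r X).eq_empty_or_nonempty with hE | ⟨x₀, hx₀⟩
  · obtain ⟨y, hy⟩ := hXc.nonempty
    refine (h.ExtSet_nonempty hT hX hn (ne_univ_iff_exists_notMem X |>.mpr ⟨y, hy⟩)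
      fun u hu x hx z hz hzu => ?_).ne_empty hE
    exact h.rel_iff_of_ExtSet_eq_empty hX hX3 hE hu hx hz hzu
      (hbad x z hx.1 hz fun e => hzu (e ▸ hx))
  · have hEB : ExtSet r (X ∪ {x₀}) = ∅ := by
      refine eq_empty_of_forall_notMem fun y hy => ?_
      refine hbad x₀ y hx₀.1 (fun hyX => hy.1 (mem_union_left _ hyX))
        (fun e => hy.1 (e ▸ mem_union_right _ rfl)) ?_
      simpa only [union_assoc, singleton_union] using hy.2
    obtain ⟨y, hy, hyx₀⟩ := hXc.exists_ne x₀
    refine (h.ExtSet_nonempty hT hx₀.2 (hn.mono subset_union_left)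
      (ne_univ_iff_exists_notMem _ |>.mpr ⟨y, by simpa [hyx₀] using hy⟩)
      fun u hu x hx z hz hzu => ?_).ne_empty hEB
    refine h.rel_iff_of_mem_ExtSet hX hX3 hx₀ hEB hu hx hz hzu
      (hbad x z (fun hxX => hx.1 (mem_union_left _ hxX)) (fun hzX => hz (mem_union_left _ hzX))
        fun e => hzu (e ▸ hx))

theorem exists_indecomposableOn_compl_singleton [Finite V] (h : IsTournament r)
    (hT : IndecomposableOn r univ) (hX : IndecomposableOn r X) (hX3 : 2 < X.encard)
    (hodd : Odd Xᶜ.ncard) : ∃ y ∉ X, IndecomposableOn r {y}ᶜ := by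
  obtain ⟨k, hk⟩ := hodd
  induction k generalizing X with
  | zero =>
    obtain ⟨y, hy⟩ := ncard_eq_one.mp hk
    exact ⟨y, (hy ▸ mem_singleton y : y ∈ Xᶜ), by rwa [← hy, compl_compl]⟩
  | succ k ih =>
    have hXc : Xᶜ.Nontrivial := one_lt_ncard_iff_nontrivial.mp (by omega)
    obtain ⟨p, q, hp, hq, hpq, hind⟩ := h.exists_pair_indecomposableOn hT hX hX3 hXc
    have hpqX : ({p, q} : Set V) ⊆ Xᶜ := pair_subset hp hq
    have hcompl : (X ∪ {p, q})ᶜ = Xᶜ \ {p, q} := by rw [compl_union, sdiff_eq]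
    have hk' : (X ∪ {p, q})ᶜ.ncard = 2 * k + 1 := by
      have := ncard_sdiff_add_ncard_of_subset hpqX
      rw [ncard_pair hpq] at this
      rw [hcompl]
      omega
    obtain ⟨y, hy, hyind⟩ := ih hind (hX3.trans_le (encard_le_encard subset_union_left)) hk'
    exact ⟨y, fun hyX => hy (mem_union_left _ hyX), hyind⟩

theorem exists_cycle (h : IsTournament r) (hT : IndecomposableOn r univ)
    (hx : ({x}ᶜ : Set V).Nontrivial) : ∃ b c, r x b ∧ r b c ∧ r c x := by
  by_contra! hcyc
  set Q := insert x {w | r x w}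
  have hQ : IsIntervalOn r univ Q := by
    refine ⟨subset_univ _, fun a ha => Or.inl fun i hi => ?_⟩
    have hax : r a x := h.rel_of_not_rel (fun e => ha.2 (e ▸ mem_insert x _))
      fun hxa => ha.2 (mem_insert_of_mem x hxa)
    rcases hi with rfl | hxi
    · exact hax
    · exact h.rel_of_not_rel (fun e => ha.2 (e ▸ mem_insert_of_mem x hxi))
        fun hia => hcyc i a hxi hia hax
  have hxB : x ∈ BrSet r (univ \ {x}) := by
    refine ⟨fun hx => hx.2 rfl, ?_⟩
    by_cases hQn : Q.Nontrivial
    · refine Or.inl fun w hw => ?_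
      have hwQ : w ∈ Q := hT.eq_of_isIntervalOn hQ hQn ▸ mem_univ w
      exact hwQ.resolve_left hw.2
    · refine Or.inr fun w hw => h.rel_of_not_rel (Ne.symm hw.2) fun hxw => hQn ?_
      exact nontrivial_of_mem_mem_ne (mem_insert x _) (mem_insert_of_mem x hxw) (Ne.symm hw.2)
  exact hT.notMem_BrSet_sdiff_singleton (mem_univ x) (by rwa [← compl_eq_univ_sdiff]) hxB

theorem indecomposableOn_of_cycle {b c : V} (h : IsTournament r) (hxb : r x b) (hbc : r b c)
    (hcx : r c x) : IndecomposableOn r {x, b, c} := by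
  refine indecomposableOn_iff.mpr fun I hI hn => ?_
  by_contra hne
  obtain ⟨t, ht, htI⟩ : ∃ t ∈ ({x, b, c} : Set V), t ∉ I :=
    not_subset.mp fun hsub => hne (hI.1.antisymm hsub)
  obtain ⟨a, ha, a', ha', haa'⟩ := hn
  have key := hI.rel_iff h ht htI ha ha'
  have hbx := h.asymm hxb
  have hcb := h.asymm hbc
  have hxc := h.asymm hcx
  have hxb' := h.ne_of_rel hxb
  have hbc' := h.ne_of_rel hbc
  have hcx' := h.ne_of_rel hcx
  have haS := hI.1 ha
  have ha'S := hI.1 ha'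
  simp only [mem_insert_iff, mem_singleton_iff] at ht haS ha'S
  -- on a 3-cycle, the vertex `t ∉ I` beats one of the other two and loses to the other
  rcases ht with rfl | rfl | rfl <;> rcases haS with rfl | rfl | rfl <;>
    rcases ha'S with rfl | rfl | rfl <;> simp_all

end IsTournament

end

/-- If `T` is indecomposable with `|V|` even and `|V| ≥ 6`, then for each
vertex `x` there is `y ≠ x` with `T − y` indecomposable. -/
theorem even_delete_vertex {V : Type*} [Fintype V] (r : V → V → Prop)
    (h : IsTournament r) (heven : Even (Fintype.card V)) (hcard : 6 ≤ Fintype.card V)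
    (hT : IndecomposableOn r Set.univ) :
    ∀ x : V, ∃ y : V, y ≠ x ∧ IndecomposableOn r {y}ᶜ := by
  intro x
  have hcompl (X : Set V) : X.ncard + Xᶜ.ncard = Fintype.card V := by
    rw [ncard_add_ncard_compl, Nat.card_eq_fintype_card]
  have hx : ({x}ᶜ : Set V).Nontrivial := by
    have := hcompl {x}
    rw [ncard_singleton] at this
    exact one_lt_ncard_iff_nontrivial.mp (by omega)
  obtain ⟨b, c, hxb, hbc, hcx⟩ := h.exists_cycle hT hx
  have h3 : ({x, b, c} : Set V).ncard = 3 :=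
    ncard_eq_three.mpr ⟨x, b, c, h.ne_of_rel hxb, (h.ne_of_rel hcx).symm, h.ne_of_rel hbc, rfl⟩
  have hodd : Odd ({x, b, c}ᶜ : Set V).ncard := by
    have := hcompl {x, b, c}
    rw [Nat.odd_iff]
    rw [Nat.even_iff] at heven
    omega
  obtain ⟨y, hy, hind⟩ := h.exists_indecomposableOn_compl_singleton hT
    (h.indecomposableOn_of_cycle hxb hbc hcx)
    (by rw [← (toFinite _).cast_ncard_eq, h3]; norm_num) hodd
  exact ⟨y, by rintro rfl; simp at hy, hind⟩
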